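/- arXiv:2604.27837 — 4 statements merged into one kernel-verified Lean document; each statement's English description precedes it below -/
import Mathlib

section
/- Let X and Y be real-valued random variables on a probability space with 𝔼[|X|·|Y|] < ∞. Then 𝔼[XY] = ∫₀^∞∫₀^∞ ℙ(X > x, Y > y) dx dy − ∫₀^∞∫₀^∞ ℙ(X > x, Y < −y) dx dy − ∫₀^∞∫₀^∞ ℙ(X < −x, Y > y) dx dy + ∫₀^∞∫₀^∞ ℙ(X < −x, Y < −y) dx dy. -/
open MeasureTheory

section aux

variable {Ω : Type*} [MeasurableSpace Ω]

lemma key_lintegral (μ : Measure Ω) [IsProbabilityMeasure μ]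
    (X Y : Ω → ℝ) (hX : Measurable X) (hY : Measurable Y) :
    ∫⁻ x in Set.Ioi (0:ℝ), ∫⁻ y in Set.Ioi (0:ℝ), μ {ω | x < X ω ∧ y < Y ω}
      = ∫⁻ ω, ENNReal.ofReal (max (X ω) 0 * max (Y ω) 0) ∂μ := by
  -- step 1: inner integral via layer cake
  have h1 : ∀ x : ℝ, ∫⁻ y in Set.Ioi (0:ℝ), μ {ω | x < X ω ∧ y < Y ω}
      = ∫⁻ ω, ENNReal.ofReal (if x < X ω then max (Y ω) 0 else 0) ∂μ := by
    intro x
    have hf : Measurable (fun ω => if x < X ω then max (Y ω) 0 else 0) :=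
      Measurable.ite (measurableSet_lt measurable_const hX) (hY.max measurable_const)
        measurable_const
    rw [lintegral_eq_lintegral_meas_lt μ
      (Filter.Eventually.of_forall (fun ω => by dsimp; split <;> simp [le_max_right]))
      hf.aemeasurable]
    refine setLIntegral_congr_fun measurableSet_Ioi ?_
    intro y hy
    beta_reduce
    congr 1
    ext ω
    simp only [Set.mem_setOf_eq]
    constructor
    · rintro ⟨h1, h2⟩; rw [if_pos h1]; exact lt_max_of_lt_left h2
    · intro h
      by_cases hx : x < X ω
      · rw [if_pos hx] at h
        refine ⟨hx, ?_⟩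
        rcases max_cases (Y ω) 0 with ⟨he, _⟩ | ⟨he, _⟩
        · rwa [he] at h
        · rw [he] at h; exact absurd h (not_lt.2 (le_of_lt hy))
      · rw [if_neg hx] at h; exact absurd h (not_lt.2 (le_of_lt hy))
  simp_rw [h1]
  -- step 2: swap
  rw [lintegral_lintegral_swap]
  · congr 1
    ext ω
    have : ∀ x : ℝ, ENNReal.ofReal (if x < X ω then max (Y ω) 0 else 0)
        = Set.indicator (Set.Iio (X ω)) (fun _ => ENNReal.ofReal (max (Y ω) 0)) x := by
      intro x
      by_cases hx : x < X ω <;> simp [Set.indicator, hx]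
    simp_rw [this]
    rw [lintegral_indicator measurableSet_Iio, Measure.restrict_restrict measurableSet_Iio,
      setLIntegral_const, Set.Iio_inter_Ioi, Real.volume_Ioo, sub_zero]
    have hX0 : ENNReal.ofReal (X ω) = ENNReal.ofReal (max (X ω) 0) := by
      rcases le_total (X ω) 0 with h | h
      · simp [max_eq_right h, ENNReal.ofReal_of_nonpos h]
      · simp [max_eq_left h]
    rw [hX0, ← ENNReal.ofReal_mul (le_max_right _ _), mul_comm]
  · apply Measurable.aemeasurable
    apply Measurable.ennreal_ofReal
    exact Measurable.ite (measurableSet_lt measurable_fst (hX.comp measurable_snd))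
      ((hY.comp measurable_snd).max measurable_const) measurable_const

end aux

section aux2

variable {Ω : Type*} [MeasurableSpace Ω]

lemma key_real (μ : Measure Ω) [IsProbabilityMeasure μ]
    (X Y : Ω → ℝ) (hX : Measurable X) (hY : Measurable Y)
    (hint : Integrable (fun ω => |X ω| * |Y ω|) μ) :
    ∫ x in Set.Ioi (0:ℝ), ∫ y in Set.Ioi (0:ℝ), (μ {ω | x < X ω ∧ y < Y ω}).toReal
      = ∫ ω, max (X ω) 0 * max (Y ω) 0 ∂μ := by
  set g : ℝ × ℝ → ENNReal := fun p => μ {ω | p.1 < X ω ∧ p.2 < Y ω} with hg_def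
  have hS : MeasurableSet {p : (ℝ × ℝ) × Ω | p.1.1 < X p.2 ∧ p.1.2 < Y p.2} := by
    apply MeasurableSet.inter
    · exact measurableSet_lt (measurable_fst.comp measurable_fst) (hX.comp measurable_snd)
    · exact measurableSet_lt (measurable_snd.comp measurable_fst) (hY.comp measurable_snd)
  have hg : Measurable g := by
    have := measurable_measure_prodMk_left (ν := μ) hS
    convert this using 1
    rfl
  set F : ℝ → ENNReal := fun x => ∫⁻ y in Set.Ioi (0:ℝ), g (x, y) with hF_def
  have hF : Measurable F := Measurable.lintegral_prod_right' hg
  have hkey : ∫⁻ x in Set.Ioi (0:ℝ), F x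
      = ∫⁻ ω, ENNReal.ofReal (max (X ω) 0 * max (Y ω) 0) ∂μ :=
    key_lintegral μ X Y hX hY
  have hfin : (∫⁻ ω, ENNReal.ofReal (max (X ω) 0 * max (Y ω) 0) ∂μ) < ⊤ := by
    have hle : ∫⁻ ω, ENNReal.ofReal (max (X ω) 0 * max (Y ω) 0) ∂μ
        ≤ ∫⁻ ω, ENNReal.ofReal (|X ω| * |Y ω|) ∂μ := by
      apply lintegral_mono
      intro ω
      apply ENNReal.ofReal_le_ofReal
      apply mul_le_mul (max_le (le_abs_self _) (abs_nonneg _))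
        (max_le (le_abs_self _) (abs_nonneg _)) (le_max_right _ _) (abs_nonneg _)
    have := (hasFiniteIntegral_iff_ofReal
      (Filter.Eventually.of_forall fun ω => mul_nonneg (abs_nonneg (X ω)) (abs_nonneg (Y ω)))).1
      hint.2
    exact lt_of_le_of_lt hle this
  have hFfin : ∀ᵐ x ∂(volume.restrict (Set.Ioi (0:ℝ))), F x < ⊤ := by
    apply ae_lt_top hF
    rw [hkey]; exact hfin.ne
  have hinner : ∀ x : ℝ, ∫ y in Set.Ioi (0:ℝ), (μ {ω | x < X ω ∧ y < Y ω}).toReal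
      = (F x).toReal := by
    intro x
    apply integral_toReal
    · exact (hg.comp (measurable_const.prodMk measurable_id)).aemeasurable
    · exact Filter.Eventually.of_forall fun y => measure_lt_top μ _
  calc ∫ x in Set.Ioi (0:ℝ), ∫ y in Set.Ioi (0:ℝ), (μ {ω | x < X ω ∧ y < Y ω}).toReal
      = ∫ x in Set.Ioi (0:ℝ), (F x).toReal := by
        apply integral_congr_ae
        exact Filter.Eventually.of_forall fun x => hinner x
    _ = (∫⁻ x in Set.Ioi (0:ℝ), F x).toReal := integral_toReal hF.aemeasurable hFfin
    _ = (∫⁻ ω, ENNReal.ofReal (max (X ω) 0 * max (Y ω) 0) ∂μ).toReal := by rw [hkey]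
    _ = ∫ ω, max (X ω) 0 * max (Y ω) 0 ∂μ := by
        rw [integral_eq_lintegral_of_nonneg_ae
          (Filter.Eventually.of_forall fun ω => mul_nonneg (le_max_right _ _) (le_max_right _ _))
          ((hX.max measurable_const).mul (hY.max measurable_const)).aestronglyMeasurable]

end aux2

/-- tail representation of `𝔼[XY]` for real random variables with
`𝔼[|X||Y|] < ∞`. -/
theorem expectation_product_tail_rep {Ω : Type*} [MeasurableSpace Ω]
    (μ : Measure Ω) [IsProbabilityMeasure μ]
    (X Y : Ω → ℝ) (hX : Measurable X) (hY : Measurable Y)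
    (hint : Integrable (fun ω => |X ω| * |Y ω|) μ) :
    ∫ ω, X ω * Y ω ∂μ =
      (∫ x in Set.Ioi (0:ℝ), ∫ y in Set.Ioi (0:ℝ),
        (μ {ω | x < X ω ∧ y < Y ω}).toReal)
      - (∫ x in Set.Ioi (0:ℝ), ∫ y in Set.Ioi (0:ℝ),
        (μ {ω | x < X ω ∧ Y ω < -y}).toReal)
      - (∫ x in Set.Ioi (0:ℝ), ∫ y in Set.Ioi (0:ℝ),
        (μ {ω | X ω < -x ∧ y < Y ω}).toReal)
      + (∫ x in Set.Ioi (0:ℝ), ∫ y in Set.Ioi (0:ℝ),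
        (μ {ω | X ω < -x ∧ Y ω < -y}).toReal) := by
  have hintn : ∀ (Z W : Ω → ℝ), (∀ ω, |Z ω| = |X ω|) → (∀ ω, |W ω| = |Y ω|) →
      Integrable (fun ω => |Z ω| * |W ω|) μ := by
    intro Z W hZ hW
    simpa [hZ, hW] using hint
  have E1 := key_real μ X Y hX hY hint
  have E2 := key_real μ X (fun ω => -Y ω) hX hY.neg
    (hintn X (fun ω => -Y ω) (fun _ => rfl) (fun ω => abs_neg _))
  have E3 := key_real μ (fun ω => -X ω) Y hX.neg hY
    (hintn (fun ω => -X ω) Y (fun ω => abs_neg _) (fun _ => rfl))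
  have E4 := key_real μ (fun ω => -X ω) (fun ω => -Y ω) hX.neg hY.neg
    (hintn (fun ω => -X ω) (fun ω => -Y ω) (fun ω => abs_neg _) (fun ω => abs_neg _))
  have s2 : ∀ x y : ℝ, {ω | x < X ω ∧ Y ω < -y} = {ω | x < X ω ∧ y < -Y ω} := by
    intro x y; ext ω; simp only [Set.mem_setOf_eq, lt_neg]
  have s3 : ∀ x y : ℝ, {ω | X ω < -x ∧ y < Y ω} = {ω | x < -X ω ∧ y < Y ω} := by
    intro x y; ext ω; simp only [Set.mem_setOf_eq, lt_neg]
  have s4 : ∀ x y : ℝ, {ω | X ω < -x ∧ Y ω < -y} = {ω | x < -X ω ∧ y < -Y ω} := by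
    intro x y; ext ω; simp only [Set.mem_setOf_eq, lt_neg]
  simp_rw [s2, s3, s4]
  rw [E1, E2, E3, E4]
  beta_reduce
  -- integrability of each piece
  have hmono : ∀ (Z W : Ω → ℝ), Measurable Z → Measurable W →
      Integrable (fun ω => |Z ω| * |W ω|) μ →
      Integrable (fun ω => max (Z ω) 0 * max (W ω) 0) μ := by
    intro Z W hZ hW hZW
    apply Integrable.mono hZW
      ((hZ.max measurable_const).mul (hW.max measurable_const)).aestronglyMeasurable
    apply Filter.Eventually.of_forall
    intro ω
    have h1 : 0 ≤ max (Z ω) 0 * max (W ω) 0 := mul_nonneg (le_max_right _ _) (le_max_right _ _)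
    simp only [Pi.mul_apply]
    rw [Real.norm_eq_abs, Real.norm_eq_abs, abs_of_nonneg h1,
      abs_of_nonneg (mul_nonneg (abs_nonneg _) (abs_nonneg _))]
    exact mul_le_mul (max_le (le_abs_self _) (abs_nonneg _))
      (max_le (le_abs_self _) (abs_nonneg _)) (le_max_right _ _) (abs_nonneg _)
  have int1 := hmono X Y hX hY (hintn X Y (fun _ => rfl) (fun _ => rfl))
  have int2 := hmono X (fun ω => -Y ω) hX hY.neg
    (hintn X (fun ω => -Y ω) (fun _ => rfl) (fun ω => abs_neg _))
  have int3 := hmono (fun ω => -X ω) Y hX.neg hY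
    (hintn (fun ω => -X ω) Y (fun ω => abs_neg _) (fun _ => rfl))
  have int4 := hmono (fun ω => -X ω) (fun ω => -Y ω) hX.neg hY.neg
    (hintn (fun ω => -X ω) (fun ω => -Y ω) (fun ω => abs_neg _) (fun ω => abs_neg _))
  have hsplit : ∫ ω, X ω * Y ω ∂μ
      = ∫ ω, ((max (X ω) 0 * max (Y ω) 0 - max (X ω) 0 * max (-Y ω) 0
          - max (-X ω) 0 * max (Y ω) 0) + max (-X ω) 0 * max (-Y ω) 0) ∂μ := by
    apply integral_congr_ae
    apply Filter.Eventually.of_forall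
    intro ω
    have ha := max_zero_sub_eq_self (X ω)
    have hb := max_zero_sub_eq_self (Y ω)
    calc X ω * Y ω = (max (X ω) 0 - max (-X ω) 0) * (max (Y ω) 0 - max (-Y ω) 0) := by
          rw [ha, hb]
      _ = _ := by ring
  have int2' : Integrable (fun ω => max (X ω) 0 * max (-Y ω) 0) μ := int2
  have int3' : Integrable (fun ω => max (-X ω) 0 * max (Y ω) 0) μ := int3
  have int4' : Integrable (fun ω => max (-X ω) 0 * max (-Y ω) 0) μ := int4
  have i12 : Integrable (fun ω => max (X ω) 0 * max (Y ω) 0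
      - max (X ω) 0 * max (-Y ω) 0) μ := int1.sub int2'
  have i123 : Integrable (fun ω => max (X ω) 0 * max (Y ω) 0
      - max (X ω) 0 * max (-Y ω) 0 - max (-X ω) 0 * max (Y ω) 0) μ := i12.sub int3'
  rw [hsplit, integral_add i123 int4', integral_sub i12 int3', integral_sub int1 int2']
end

section
/- Let F₀ be a CDF supported on [0,M], φ strictly convex and C¹, α ∈ (0,1), and ε > 0. Define the BW ball 𝓑(F₀,ε) = {F CDF on [0,M] : ∫₀¹ B_φ(F⁻¹(t), F₀⁻¹(t)) dt ≤ ε}. If ε > ∫_α^1 B_φ(M, F₀⁻¹(t)) dt, then sup over F ∈ 𝓑(F₀,ε) of the α-quantile F⁻¹(α) equals M. -/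
open MeasureTheory Set

/-- `F` is a CDF with support contained in `[0,M]`. -/
def IsCDFOn (F : ℝ → ℝ) (M : ℝ) : Prop :=
  Monotone F ∧ (∀ x < (0:ℝ), F x = 0) ∧ (∀ x, M ≤ x → F x = 1) ∧
    ∀ x, ContinuousWithinAt F (Set.Ici x) x

/-- Left-continuous quantile function (`VaR` at level `t`). -/
noncomputable def quantile (F : ℝ → ℝ) (t : ℝ) : ℝ :=
  sInf {z | t ≤ F z}

/-- Bregman divergence with generator `φ`. -/
noncomputable def Bdiv (φ : ℝ → ℝ) (x y : ℝ) : ℝ :=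
  φ x - φ y - deriv φ y * (x - y)

/-- `F` belongs to the Bregman–Wasserstein ball of radius `ε` around `F₀`. -/
noncomputable def InBWBall (φ F₀ F : ℝ → ℝ) (M ε : ℝ) : Prop :=
  IsCDFOn F M ∧
    (∫ t in Set.Ioo (0:ℝ) 1, Bdiv φ (quantile F t) (quantile F₀ t)) ≤ ε

lemma zero_mem_lowerBounds {F : ℝ → ℝ} {M t : ℝ} (hF : IsCDFOn F M) (ht0 : 0 < t) :
    (0:ℝ) ∈ lowerBounds {z | t ≤ F z} := by
  intro z hz
  by_contra h
  push_neg at h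
  have h0 : F z = 0 := hF.2.1 z h
  rw [Set.mem_setOf_eq, h0] at hz
  exact absurd hz (not_le.mpr ht0)

lemma M_mem_quantile_set {F : ℝ → ℝ} {M t : ℝ} (hF : IsCDFOn F M) (ht1 : t ≤ 1) :
    M ∈ {z | t ≤ F z} := by
  simpa [Set.mem_setOf_eq, hF.2.2.1 M le_rfl] using ht1

lemma quantile_mem_Icc {F : ℝ → ℝ} {M t : ℝ} (hF : IsCDFOn F M) (ht0 : 0 < t) (ht1 : t ≤ 1) :
    quantile F t ∈ Set.Icc 0 M :=
  ⟨le_csInf ⟨M, M_mem_quantile_set hF ht1⟩ (zero_mem_lowerBounds hF ht0),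
    csInf_le ⟨0, zero_mem_lowerBounds hF ht0⟩ (M_mem_quantile_set hF ht1)⟩

lemma Bdiv_self (φ : ℝ → ℝ) (y : ℝ) : Bdiv φ y y = 0 := by
  simp [Bdiv]

/-- if `ε > ∫_α^1 B_φ(M, F₀⁻¹(t)) dt` then the worst-case
`α`-quantile over the BW ball equals `M`. -/
theorem sup_var_eq_M (M ε α : ℝ) (hM : 0 < M) (hε : 0 < ε)
    (hα : α ∈ Set.Ioo (0:ℝ) 1) (φ F₀ : ℝ → ℝ)
    (hφ : StrictConvexOn ℝ Set.univ φ) (hφd : ContDiff ℝ 1 φ)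
    (hF₀ : IsCDFOn F₀ M)
    (hbig : (∫ t in Set.Ioc α 1, Bdiv φ M (quantile F₀ t)) < ε) :
    sSup {v : ℝ | ∃ F : ℝ → ℝ, InBWBall φ F₀ F M ε ∧ v = quantile F α} = M := by
  obtain ⟨hα0, hα1⟩ := hα
  set g : ℝ → ℝ := fun t => Bdiv φ M (quantile F₀ t) with hg_def
  set I : ℝ := ∫ t in Set.Ioc α 1, g t with hI_def
  -- continuity of y ↦ Bdiv φ M y
  have hφc : Continuous φ := hφd.continuous
  have hdc : Continuous (deriv φ) := hφd.continuous_deriv le_rfl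
  have hBc : Continuous (fun y => Bdiv φ M y) := by
    unfold Bdiv
    exact (continuous_const.sub hφc).sub (hdc.mul (continuous_const.sub continuous_id))
  -- bound C for |Bdiv φ M y| on [0, M]
  obtain ⟨y₀, hy₀, hy₀max⟩ := (isCompact_Icc : IsCompact (Icc (0:ℝ) M)).exists_isMaxOn
    (nonempty_Icc.mpr hM.le) (continuous_abs.comp hBc).continuousOn
  rw [isMaxOn_iff] at hy₀max
  set C : ℝ := |Bdiv φ M y₀| with hC_def
  have hC0 : 0 ≤ C := abs_nonneg _
  have hIlt : I < ε := hbig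
  -- choose δ
  set δ : ℝ := min (α/2) ((ε - I)/(2*(C+1))) with hδ_def
  have hδ0 : 0 < δ := lt_min (by linarith) (div_pos (by linarith) (by linarith))
  have hδhalf : δ ≤ α/2 := min_le_left _ _
  have haδ0 : 0 < α - δ := by linarith
  have haδα : α - δ < α := by linarith
  have haδ1 : α - δ < 1 := by linarith
  have hCδ : C * δ ≤ (ε - I)/2 := by
    have h1 : δ ≤ (ε - I)/(2*(C+1)) := min_le_right _ _
    have h2 : C * δ ≤ C * ((ε - I)/(2*(C+1))) := mul_le_mul_of_nonneg_left h1 hC0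
    have h3 : C * ((ε - I)/(2*(C+1))) ≤ (ε - I)/2 := by
      rw [mul_div_assoc', div_le_div_iff₀ (by positivity) (by norm_num)]
      nlinarith
    linarith
  -- the worst-case CDF
  set F : ℝ → ℝ := fun x => if M ≤ x then (1:ℝ) else min (F₀ x) (α - δ) with hF_def
  have hFle : ∀ x, x < M → F x = min (F₀ x) (α - δ) := fun x hx => if_neg (not_le.mpr hx)
  have hFge : ∀ x, M ≤ x → F x = 1 := fun x hx => if_pos hx
  have hFcdf : IsCDFOn F M := by
    refine ⟨?_, ?_, hFge, ?_⟩
    · intro x y hxy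
      by_cases hx : M ≤ x
      · rw [hFge x hx, hFge y (le_trans hx hxy)]
      · push_neg at hx
        rw [hFle x hx]
        by_cases hy : M ≤ y
        · rw [hFge y hy]
          exact le_trans (min_le_right _ _) (by linarith)
        · push_neg at hy
          rw [hFle y hy]
          exact min_le_min (hF₀.1 hxy) le_rfl
    · intro x hx
      rw [hFle x (by linarith), hF₀.2.1 x hx]
      exact min_eq_left (by linarith)
    · intro x
      by_cases hx : M ≤ x
      · refine (continuousWithinAt_const (b := (1:ℝ))).congr (fun y hy => ?_) ?_
        · exact hFge y (le_trans hx hy)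
        · exact hFge x hx
      · push_neg at hx
        have hG : ContinuousWithinAt (fun y => min (F₀ y) (α - δ)) (Set.Ici x) x :=
          (hF₀.2.2.2 x).min continuousWithinAt_const
        refine hG.congr_of_eventuallyEq ?_ (hFle x hx)
        have hmem : Set.Iio M ∈ nhdsWithin x (Set.Ici x) :=
          mem_nhdsWithin_of_mem_nhds (isOpen_Iio.mem_nhds hx)
        filter_upwards [hmem] with y hy
        exact hFle y hy
  -- quantile of F above α - δ is M
  have hqM : ∀ t, α - δ < t → t ≤ 1 → quantile F t = M := by
    intro t ht ht1
    have hset : {z | t ≤ F z} = Set.Ici M := by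
      ext z
      simp only [Set.mem_setOf_eq, Set.mem_Ici]
      constructor
      · intro hz
        by_contra h
        push_neg at h
        rw [hFle z h] at hz
        have := le_trans hz (min_le_right _ _)
        linarith
      · intro hz
        rw [hFge z hz]; exact ht1
    rw [quantile, hset, csInf_Ici]
  -- quantile of F below α - δ agrees with F₀
  have hqeq : ∀ t, 0 < t → t ≤ α - δ → quantile F t = quantile F₀ t := by
    intro t ht0 htδ
    have hset : {z | t ≤ F z} = {z | t ≤ F₀ z} := by
      ext z
      simp only [Set.mem_setOf_eq]
      by_cases hz : M ≤ z
      · rw [hFge z hz, hF₀.2.2.1 z hz]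
      · push_neg at hz
        rw [hFle z hz, le_min_iff]
        constructor
        · exact fun h => h.1
        · exact fun h => ⟨h, htδ⟩
    rw [quantile, quantile, hset]
  -- integrability of g on (0,1]
  have hmono : MonotoneOn (quantile F₀) (Set.Ioc (0:ℝ) 1) := by
    intro t ht s hs hts
    exact csInf_le_csInf ⟨0, zero_mem_lowerBounds hF₀ ht.1⟩
      ⟨M, M_mem_quantile_set hF₀ hs.2⟩ (fun z hz => le_trans hts hz)
  have hqaem : AEMeasurable (quantile F₀) (volume.restrict (Set.Ioc (0:ℝ) 1)) :=
    aemeasurable_restrict_of_monotoneOn measurableSet_Ioc hmono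
  have hgaem : AEMeasurable g (volume.restrict (Set.Ioc (0:ℝ) 1)) :=
    hBc.measurable.comp_aemeasurable hqaem
  have hgbound : ∀ t ∈ Set.Ioc (0:ℝ) 1, ‖g t‖ ≤ C := by
    intro t ht
    exact hy₀max (quantile F₀ t) (quantile_mem_Icc hF₀ ht.1 ht.2)
  have hgint : IntegrableOn g (Set.Ioc (0:ℝ) 1) := by
    refine Integrable.mono' (g := fun _ => C)
      (integrableOn_const measure_Ioc_lt_top.ne) hgaem.aestronglyMeasurable ?_
    exact (ae_restrict_iff' measurableSet_Ioc).mpr (Filter.Eventually.of_forall hgbound)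
  have hsub1 : Set.Ioc (α - δ) α ⊆ Set.Ioc (0:ℝ) 1 :=
    fun z hz => ⟨lt_of_le_of_lt haδ0.le hz.1, le_trans hz.2 hα1.le⟩
  have hsub2 : Set.Ioc α 1 ⊆ Set.Ioc (0:ℝ) 1 := fun z hz => ⟨lt_trans hα0 hz.1, hz.2⟩
  have hsub3 : Set.Ioc (α - δ) 1 ⊆ Set.Ioc (0:ℝ) 1 := fun z hz => ⟨lt_of_le_of_lt haδ0.le hz.1, hz.2⟩
  have hgint1 : IntegrableOn g (Set.Ioc (α - δ) α) := hgint.mono_set hsub1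
  have hgint2 : IntegrableOn g (Set.Ioc α 1) := hgint.mono_set hsub2
  have hgint3 : IntegrableOn g (Set.Ioc (α - δ) 1) := hgint.mono_set hsub3
  -- bound the middle piece
  have hmid : (∫ t in Set.Ioc (α - δ) α, g t) ≤ C * δ := by
    have h1 : (∫ t in Set.Ioc (α - δ) α, g t) ≤ ∫ _ in Set.Ioc (α - δ) α, C := by
      refine setIntegral_mono_on hgint1 (integrableOn_const measure_Ioc_lt_top.ne)
        measurableSet_Ioc ?_
      intro t ht
      exact le_trans (le_abs_self _) (hgbound t (hsub1 ht))
    have h2 : (∫ _ in Set.Ioc (α - δ) α, C) = C * δ := by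
      rw [setIntegral_const, Real.volume_real_Ioc_of_le haδα.le, smul_eq_mul]
      rw [show α - (α - δ) = δ by ring]
      ring
    linarith
  -- the integrand for F
  set f : ℝ → ℝ := fun t => Bdiv φ (quantile F t) (quantile F₀ t) with hf_def
  have hf0 : ∀ t ∈ Set.Ioc (0:ℝ) (α - δ), f t = 0 := by
    intro t ht
    rw [hf_def]; simp only
    rw [hqeq t ht.1 ht.2, Bdiv_self]
  have hfg : ∀ t ∈ Set.Ioo (α - δ) (1:ℝ), f t = g t := by
    intro t ht
    rw [hf_def]; simp only
    rw [hqM t ht.1 ht.2.le]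
  -- compute the total integral
  have hsplit : Set.Ioc (0:ℝ) (α - δ) ∪ Set.Ioo (α - δ) 1 = Set.Ioo (0:ℝ) 1 :=
    Set.Ioc_union_Ioo_eq_Ioo haδ0.le haδ1
  have hdisj : Disjoint (Set.Ioc (0:ℝ) (α - δ)) (Set.Ioo (α - δ) 1) :=
    Set.disjoint_left.mpr fun z hz hz' => absurd hz.2 (not_le.mpr hz'.1)
  have hfint1 : IntegrableOn f (Set.Ioc (0:ℝ) (α - δ)) := by
    rw [integrableOn_congr_fun hf0 measurableSet_Ioc]
    exact integrableOn_zero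
  have hfint2 : IntegrableOn f (Set.Ioo (α - δ) 1) := by
    rw [integrableOn_congr_fun hfg measurableSet_Ioo]
    exact (hgint3.mono_set Set.Ioo_subset_Ioc_self)
  have htotal : (∫ t in Set.Ioo (0:ℝ) 1, f t) ≤ ε := by
    rw [← hsplit, setIntegral_union hdisj measurableSet_Ioo hfint1 hfint2]
    have e1 : (∫ t in Set.Ioc (0:ℝ) (α - δ), f t) = 0 := by
      rw [setIntegral_congr_fun measurableSet_Ioc hf0]
      simp
    have e2 : (∫ t in Set.Ioo (α - δ) 1, f t) = ∫ t in Set.Ioc (α - δ) 1, g t := by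
      rw [setIntegral_congr_fun measurableSet_Ioo hfg, ← integral_Ioc_eq_integral_Ioo]
    have e3 : (∫ t in Set.Ioc (α - δ) 1, g t)
        = (∫ t in Set.Ioc (α - δ) α, g t) + I := by
      rw [hI_def, ← setIntegral_union
        (Set.disjoint_left.mpr fun z hz hz' => absurd hz.2 (not_le.mpr hz'.1))
        measurableSet_Ioc hgint1 hgint2, Set.Ioc_union_Ioc_eq_Ioc haδα.le hα1.le]
    rw [e1, e2, e3]
    linarith
  -- membership of M
  have hmem : M ∈ {v : ℝ | ∃ F : ℝ → ℝ, InBWBall φ F₀ F M ε ∧ v = quantile F α} :=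
    ⟨F, ⟨hFcdf, htotal⟩, (hqM α haδα hα1.le).symm⟩
  -- upper bound
  have hub : ∀ v ∈ {v : ℝ | ∃ F : ℝ → ℝ, InBWBall φ F₀ F M ε ∧ v = quantile F α}, v ≤ M := by
    rintro v ⟨F', hF', rfl⟩
    exact (quantile_mem_Icc hF'.1 hα0 hα1.le).2
  exact le_antisymm (csSup_le ⟨M, hmem⟩ hub) (le_csSup ⟨M, hub⟩ hmem)
end

section
/- Let F₀ be a CDF on [0,M], φ strictly convex and C¹, α ∈ (0,1), and 0 < ε ≤ ∫_α^1 B_φ(M, F₀⁻¹(t)) dt. Define V̄_α = inf{ D ∈ (F₀⁻¹(α), M] : ∫_α^{F₀(D)} B_φ(D, F₀⁻¹(t)) dt ≥ ε }. Then sup_{F ∈ 𝓑(F₀,ε)} F⁻¹(α) = V̄_α, where 𝓑(F₀,ε) is the Bregman–Wasserstein ball of radius ε around F₀. -/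
/-- The worst-case VaR threshold `V̄_α`. -/
noncomputable def Vbar (φ F₀ : ℝ → ℝ) (M ε α : ℝ) : ℝ :=
  sInf {D : ℝ | D ∈ Set.Ioc (quantile F₀ α) M ∧
    ε ≤ ∫ t in Set.Ioc α (F₀ D), Bdiv φ D (quantile F₀ t)}

open Set MeasureTheory

/-! ### Bregman divergence lemmas -/

section convex
variable {φ : ℝ → ℝ} (hφ : StrictConvexOn ℝ Set.univ φ) (hφd : ContDiff ℝ 1 φ)

lemma bdiv_self (φ : ℝ → ℝ) (x : ℝ) : Bdiv φ x x = 0 := by simp [Bdiv]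

include hφ hφd in
lemma bdiv_nonneg (x y : ℝ) : 0 ≤ Bdiv φ x y := by
  have hd : ∀ z, DifferentiableAt ℝ φ z := fun z =>
    (hφd.differentiable one_ne_zero).differentiableAt
  rcases lt_trichotomy x y with h | rfl | h
  · have h1 := hφ.convexOn.slope_le_deriv (mem_univ x) (mem_univ y) h (hd y)
    rw [slope_def_field, div_le_iff₀ (by linarith)] at h1
    unfold Bdiv; nlinarith
  · simp [Bdiv]
  · have h1 := hφ.convexOn.deriv_le_slope (mem_univ y) (mem_univ x) h (hd y)
    rw [slope_def_field, le_div_iff₀ (by linarith)] at h1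
    unfold Bdiv; nlinarith

include hφ hφd in
lemma bdiv_lt_bdiv {x x' y : ℝ} (h1 : y ≤ x') (h2 : x' < x) :
    Bdiv φ x' y < Bdiv φ x y := by
  have hd : ∀ z, DifferentiableAt ℝ φ z := fun z =>
    (hφd.differentiable one_ne_zero).differentiableAt
  have hmono := hφ.convexOn.monotoneOn_deriv (fun z _ => hd z)
  have hdy : deriv φ y ≤ deriv φ x' := hmono (mem_univ y) (mem_univ x') h1
  have h3 := hφ.deriv_lt_slope (mem_univ x') (mem_univ x) h2 (hd x')
  rw [slope_def_field, lt_div_iff₀ (by linarith)] at h3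
  unfold Bdiv; nlinarith

include hφd in
lemma bdiv_continuous : Continuous fun p : ℝ × ℝ => Bdiv φ p.1 p.2 := by
  have hc : Continuous φ := hφd.continuous
  have hc' : Continuous (deriv φ) := hφd.continuous_deriv le_rfl
  unfold Bdiv
  fun_prop

end convex

/-! ### CDF and quantile lemmas -/

section cdf
variable {F : ℝ → ℝ} {M : ℝ} (hF : IsCDFOn F M)

include hF

lemma cdf_nonneg (x : ℝ) : 0 ≤ F x := by
  calc (0:ℝ) = F (min x 0 - 1) := (hF.2.1 _ (by have := min_le_right x 0; linarith)).symm
    _ ≤ F x := hF.1 (by have := min_le_left x 0; linarith)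

lemma cdf_le_one (x : ℝ) : F x ≤ 1 := by
  calc F x ≤ F (max x M) := hF.1 (le_max_left _ _)
    _ = 1 := hF.2.2.1 _ (le_max_right _ _)

lemma qset_bddBelow {t : ℝ} (ht : 0 < t) : BddBelow {z | t ≤ F z} := by
  refine ⟨0, fun z hz => ?_⟩
  by_contra h
  push_neg at h
  have := hF.2.1 z h
  simp only [mem_setOf_eq, this] at hz
  linarith

lemma qset_mem {t : ℝ} (ht : t ≤ 1) : M ∈ {z | t ≤ F z} := by
  simp only [mem_setOf_eq, hF.2.2.1 M le_rfl]; exact ht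

lemma quantile_le {t z : ℝ} (ht : 0 < t) (h : t ≤ F z) : quantile F t ≤ z :=
  csInf_le (qset_bddBelow hF ht) h

lemma quantile_nonneg {t : ℝ} (ht : 0 < t) (ht1 : t ≤ 1) : 0 ≤ quantile F t := by
  refine le_csInf ⟨M, qset_mem hF ht1⟩ fun z hz => ?_
  by_contra h
  push_neg at h
  have := hF.2.1 z h
  simp only [mem_setOf_eq, this] at hz
  linarith

lemma quantile_le_M {t : ℝ} (ht : 0 < t) (ht1 : t ≤ 1) : quantile F t ≤ M :=
  quantile_le hF ht (by rw [hF.2.2.1 M le_rfl]; exact ht1)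

lemma le_cdf_quantile {t : ℝ} (ht : 0 < t) (ht1 : t ≤ 1) : t ≤ F (quantile F t) := by
  set q := quantile F t with hq
  have hforall : ∀ z ∈ Ioi q, t ≤ F z := by
    intro z hz
    obtain ⟨w, hw, hwz⟩ := exists_lt_of_csInf_lt ⟨M, qset_mem hF ht1⟩ (show q < z from hz)
    exact le_trans hw (hF.1 hwz.le)
  have htend : Filter.Tendsto F (nhdsWithin q (Ioi q)) (nhds (F q)) :=
    (hF.2.2.2 q).mono_left (nhdsWithin_mono q Ioi_subset_Ici_self)
  exact ge_of_tendsto htend (eventually_nhdsWithin_of_forall hforall)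

lemma quantile_le_iff {t z : ℝ} (ht : 0 < t) (ht1 : t ≤ 1) :
    quantile F t ≤ z ↔ t ≤ F z :=
  ⟨fun h => le_trans (le_cdf_quantile hF ht ht1) (hF.1 h), quantile_le hF ht⟩

lemma quantile_monoOn : MonotoneOn (quantile F) (Ioc (0:ℝ) 1) := by
  intro s hs t ht hst
  exact csInf_le_csInf (qset_bddBelow hF hs.1) ⟨M, qset_mem hF ht.2⟩
    (fun z hz => le_trans hst hz)

end cdf

/-! ### Integrability -/

lemma integrableOn_bdiv {φ : ℝ → ℝ} (hφd : ContDiff ℝ 1 φ) {f g : ℝ → ℝ} {s : Set ℝ} {M : ℝ}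
    (hs : MeasurableSet s) (hsub : s ⊆ Set.Ioc 0 1)
    (hf : MonotoneOn f s) (hg : MonotoneOn g s)
    (hfb : ∀ t ∈ s, |f t| ≤ M) (hgb : ∀ t ∈ s, |g t| ≤ M) :
    IntegrableOn (fun t => Bdiv φ (f t) (g t)) s := by
  obtain ⟨C, hC⟩ := (isCompact_Icc.prod isCompact_Icc).exists_bound_of_continuousOn
    (s := Icc (-M) M ×ˢ Icc (-M) M) (bdiv_continuous hφd).continuousOn
  have hfin : volume s < ⊤ :=
    lt_of_le_of_lt (measure_mono hsub) (by simp)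
  have hfm : AEMeasurable f (volume.restrict s) := aemeasurable_restrict_of_monotoneOn hs hf
  have hgm : AEMeasurable g (volume.restrict s) := aemeasurable_restrict_of_monotoneOn hs hg
  have hmeas : AEMeasurable (fun t => Bdiv φ (f t) (g t)) (volume.restrict s) :=
    (bdiv_continuous hφd).measurable.comp_aemeasurable (hfm.prodMk hgm)
  refine Integrable.mono' (g := fun _ => C) (integrableOn_const hfin.ne)
    hmeas.aestronglyMeasurable ?_
  refine (ae_restrict_iff' hs).2 (Filter.Eventually.of_forall fun t ht => ?_)
  have h1 := abs_le.1 (hfb t ht)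
  have h2 := abs_le.1 (hgb t ht)
  exact hC (f t, g t) ⟨⟨h1.1, h1.2⟩, ⟨h2.1, h2.2⟩⟩

/-- strict integral inequality on an interval -/
lemma setIntegral_lt_setIntegral {f g : ℝ → ℝ} {a b : ℝ} (hab : a < b)
    (hfi : IntegrableOn f (Ioo a b)) (hgi : IntegrableOn g (Ioo a b))
    (h : ∀ t ∈ Ioo a b, f t < g t) :
    (∫ t in Ioo a b, f t) < ∫ t in Ioo a b, g t := by
  have hpos : 0 < ∫ t in Ioo a b, (g t - f t) := by
    rw [setIntegral_pos_iff_support_of_nonneg_ae]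
    · refine lt_of_lt_of_le ?_ (measure_mono (subset_inter (fun t ht => ?_) Subset.rfl))
      · simp [hab]
      · have hlt := h t ht
        simp only [Function.mem_support]
        intro hz
        rw [sub_eq_zero] at hz
        exact absurd hlt (by rw [hz]; exact lt_irrefl _)
    · exact (ae_restrict_iff' measurableSet_Ioo).2
        (Filter.Eventually.of_forall fun t ht => sub_nonneg.2 (h t ht).le)
    · exact hgi.sub hfi
  have := integral_sub hgi hfi
  rw [this] at hpos
  linarith


/-! ### Part 1: upper bound -/

lemma quantile_ball_le (M ε α : ℝ) (hM : 0 < M) (hε : 0 < ε)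
    (hα : α ∈ Set.Ioo (0:ℝ) 1) (φ F₀ F : ℝ → ℝ)
    (hφ : StrictConvexOn ℝ Set.univ φ) (hφd : ContDiff ℝ 1 φ)
    (hF₀ : IsCDFOn F₀ M) (hFb : InBWBall φ F₀ F M ε)
    (D : ℝ) (hD : D ∈ Set.Ioc (quantile F₀ α) M)
    (hcost : ε ≤ ∫ t in Set.Ioc α (F₀ D), Bdiv φ D (quantile F₀ t)) :
    quantile F α ≤ D := by
  by_contra hlt
  push_neg at hlt
  obtain ⟨hF, hint⟩ := hFb
  have hα0 := hα.1
  have hα1 := hα.2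
  set β := F₀ D with hβ
  have hβ1 : β ≤ 1 := cdf_le_one hF₀ D
  have hαβ : α ≤ β :=
    le_trans (le_cdf_quantile hF₀ hα0 hα1.le) (hF₀.1 hD.1.le)
  have hαβ' : α < β := by
    rcases eq_or_lt_of_le hαβ with h | h
    · exfalso; rw [← h] at hcost; simp at hcost; linarith
    · exact h
  have hDnn : 0 ≤ D := le_trans (quantile_nonneg hF₀ hα0 hα1.le) hD.1.le
  have hDM : |D| ≤ M := abs_le.2 ⟨by linarith, hD.2⟩
  have hsub01 : Ioo α β ⊆ Ioc (0:ℝ) 1 := fun t ht => ⟨lt_trans hα0 ht.1, le_trans ht.2.le hβ1⟩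
  have hsubIoo : Ioo α β ⊆ Ioo (0:ℝ) 1 := fun t ht => ⟨lt_trans hα0 ht.1, lt_of_lt_of_le ht.2 hβ1⟩
  have hIoo01 : Ioo (0:ℝ) 1 ⊆ Ioc (0:ℝ) 1 := fun t ht => ⟨ht.1, ht.2.le⟩
  -- bounds for quantiles
  have hqb : ∀ (G : ℝ → ℝ), IsCDFOn G M → ∀ t ∈ Ioc (0:ℝ) 1, |quantile G t| ≤ M := by
    intro G hG t ht
    exact abs_le.2 ⟨by linarith [quantile_nonneg hG ht.1 ht.2], quantile_le_M hG ht.1 ht.2⟩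
  -- integrability
  have hbig : IntegrableOn (fun t => Bdiv φ (quantile F t) (quantile F₀ t)) (Ioo (0:ℝ) 1) :=
    integrableOn_bdiv hφd measurableSet_Ioo hIoo01
      ((quantile_monoOn hF).mono hIoo01) ((quantile_monoOn hF₀).mono hIoo01)
      (fun t ht => hqb F hF t (hIoo01 ht)) (fun t ht => hqb F₀ hF₀ t (hIoo01 ht))
  have hbig' : IntegrableOn (fun t => Bdiv φ (quantile F t) (quantile F₀ t)) (Ioo α β) :=
    hbig.mono_set hsubIoo
  have hsml : IntegrableOn (fun t => Bdiv φ D (quantile F₀ t)) (Ioo α β) :=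
    integrableOn_bdiv hφd measurableSet_Ioo hsub01
      (monotoneOn_const.mono (subset_univ _) |>.mono (fun t ht => mem_univ t))
      ((quantile_monoOn hF₀).mono hsub01)
      (fun t _ => hDM) (fun t ht => hqb F₀ hF₀ t (hsub01 ht))
  -- pointwise strict inequality
  have hpt : ∀ t ∈ Ioo α β, Bdiv φ D (quantile F₀ t) < Bdiv φ (quantile F t) (quantile F₀ t) := by
    intro t ht
    have h1 : quantile F₀ t ≤ D := quantile_le hF₀ (lt_trans hα0 ht.1) ht.2.le
    have h2 : D < quantile F t :=
      lt_of_lt_of_le hlt (quantile_monoOn hF ⟨hα0, hα1.le⟩ (hsub01 ht) ht.1.le)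
    exact bdiv_lt_bdiv hφ hφd h1 h2
  have hchain1 : (∫ t in Ioc α β, Bdiv φ D (quantile F₀ t))
      = ∫ t in Ioo α β, Bdiv φ D (quantile F₀ t) :=
    (setIntegral_congr_set Ioo_ae_eq_Ioc).symm
  have hchain2 : (∫ t in Ioo α β, Bdiv φ D (quantile F₀ t))
      < ∫ t in Ioo α β, Bdiv φ (quantile F t) (quantile F₀ t) :=
    setIntegral_lt_setIntegral hαβ' hsml hbig' hpt
  have hchain3 : (∫ t in Ioo α β, Bdiv φ (quantile F t) (quantile F₀ t))
      ≤ ∫ t in Ioo (0:ℝ) 1, Bdiv φ (quantile F t) (quantile F₀ t) := by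
    refine setIntegral_mono_set hbig ?_ (HasSubset.Subset.eventuallyLE hsubIoo)
    exact (ae_restrict_iff' measurableSet_Ioo).2
      (Filter.Eventually.of_forall fun t _ => bdiv_nonneg hφ hφd _ _)
  rw [hchain1] at hcost
  linarith


/-! ### Part 2: the construction -/

lemma exists_ball_quantile_eq (M ε α : ℝ) (hM : 0 < M) (hε : 0 < ε)
    (hα : α ∈ Set.Ioo (0:ℝ) 1) (φ F₀ : ℝ → ℝ)
    (hφ : StrictConvexOn ℝ Set.univ φ) (hφd : ContDiff ℝ 1 φ)
    (hF₀ : IsCDFOn F₀ M) (D : ℝ) (hD1 : quantile F₀ α < D) (hD2 : D ≤ M)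
    (hcost : (∫ t in Set.Ioc α (F₀ D), Bdiv φ D (quantile F₀ t)) < ε) :
    ∃ F : ℝ → ℝ, InBWBall φ F₀ F M ε ∧ quantile F α = D := by
  have hα0 := hα.1
  have hα1 := hα.2
  set β := F₀ D with hβdef
  have hβ1 : β ≤ 1 := cdf_le_one hF₀ D
  have hαβ : α ≤ β :=
    le_trans (le_cdf_quantile hF₀ hα0 hα1.le) (hF₀.1 hD1.le)
  have hq0nn : 0 ≤ quantile F₀ α := quantile_nonneg hF₀ hα0 hα1.le
  have hD0 : 0 < D := lt_of_le_of_lt hq0nn hD1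
  have hDM : |D| ≤ M := abs_le.2 ⟨by linarith, hD2⟩
  -- uniform bound on the Bregman divergence over [-M,M]²
  obtain ⟨C, hC⟩ := (isCompact_Icc.prod isCompact_Icc).exists_bound_of_continuousOn
    (s := Icc (-M) M ×ˢ Icc (-M) M) (bdiv_continuous hφd).continuousOn
  have hC0 : 0 ≤ C := by
    refine le_trans (norm_nonneg (Bdiv φ 0 0)) (hC (0, 0) ?_)
    simp only [mem_prod, mem_Icc]
    constructor <;> constructor <;> linarith
  set cost := ∫ t in Set.Ioc α β, Bdiv φ D (quantile F₀ t) with hcostdef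
  set δ := (ε - cost) / (C + 1) with hδdef
  have hδ : 0 < δ := div_pos (by linarith) (by linarith)
  set α' := max (α / 2) (α - δ) with hα'def
  have hα'0 : 0 < α' := lt_of_lt_of_le (by linarith) (le_max_left _ _)
  have hα'α : α' < α := max_lt (by linarith) (by linarith)
  have hαδ : α - α' ≤ δ := by
    have := le_max_right (α / 2) (α - δ); linarith
  -- the modified CDF
  set F₁ : ℝ → ℝ := fun x => if x < D then min (F₀ x) α' else F₀ x with hF₁def
  have hF₁lt : ∀ x, x < D → F₁ x = min (F₀ x) α' := by
    intro x hx; rw [hF₁def]; simp [hx]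
  have hF₁ge : ∀ x, D ≤ x → F₁ x = F₀ x := by
    intro x hx; rw [hF₁def]; simp [not_lt.2 hx]
  have hF₁mono : Monotone F₁ := by
    intro a b hab
    by_cases ha : a < D
    · by_cases hb : b < D
      · rw [hF₁lt a ha, hF₁lt b hb]
        exact min_le_min (hF₀.1 hab) le_rfl
      · rw [hF₁lt a ha, hF₁ge b (not_lt.1 hb)]
        exact le_trans (min_le_left _ _) (hF₀.1 hab)
    · have hb : ¬ b < D := fun h => ha (lt_of_le_of_lt hab h)
      rw [hF₁ge a (not_lt.1 ha), hF₁ge b (not_lt.1 hb)]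
      exact hF₀.1 hab
  have hF₁cdf : IsCDFOn F₁ M := by
    refine ⟨hF₁mono, ?_, ?_, ?_⟩
    · intro x hx
      rw [hF₁lt x (lt_trans hx hD0), hF₀.2.1 x hx]
      exact min_eq_left hα'0.le
    · intro x hx
      rw [hF₁ge x (le_trans hD2 hx)]
      exact hF₀.2.2.1 x hx
    · intro x
      by_cases hx : x < D
      · have hmem : Iio D ∈ nhds x := isOpen_Iio.mem_nhds hx
        have hG : ContinuousWithinAt (fun z => min (F₀ z) α') (Ici x) x :=
          (hF₀.2.2.2 x).min continuousWithinAt_const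
        refine hG.congr_of_eventuallyEq ?_ (hF₁lt x hx)
        filter_upwards [mem_nhdsWithin_of_mem_nhds hmem] with z hz
        exact hF₁lt z hz
      · push_neg at hx
        refine (hF₀.2.2.2 x).congr (fun z hz => hF₁ge z (le_trans hx hz)) (hF₁ge x hx)
  -- quantiles of F₁
  have hq1 : ∀ t, 0 < t → t ≤ α' → quantile F₁ t = quantile F₀ t := by
    intro t ht0 htα'
    unfold quantile
    congr 1
    ext z
    by_cases hz : z < D
    · simp only [mem_setOf_eq, hF₁lt z hz, le_min_iff]
      exact ⟨fun h => h.1, fun h => ⟨h, le_trans htα' le_rfl⟩⟩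
    · simp only [mem_setOf_eq, hF₁ge z (not_lt.1 hz)]
  have hq2 : ∀ t, α' < t → t ≤ β → quantile F₁ t = D := by
    intro t ht1 ht2
    have ht0 : 0 < t := lt_trans hα'0 ht1
    have htt1 : t ≤ 1 := le_trans ht2 hβ1
    refine le_antisymm ?_ ?_
    · refine quantile_le hF₁cdf ht0 ?_
      rw [hF₁ge D le_rfl]
      exact ht2
    · refine le_csInf ⟨M, qset_mem hF₁cdf htt1⟩ fun z hz => ?_
      by_contra h
      push_neg at h
      rw [mem_setOf_eq, hF₁lt z h] at hz
      have : t ≤ α' := le_trans hz (min_le_right _ _)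
      linarith
  have hq3 : ∀ t, β < t → quantile F₁ t = quantile F₀ t := by
    intro t ht
    unfold quantile
    congr 1
    ext z
    by_cases hz : z < D
    · simp only [mem_setOf_eq, hF₁lt z hz, le_min_iff]
      constructor
      · rintro ⟨-, h2⟩
        exfalso
        have := lt_of_lt_of_le hα'α (le_trans hαβ ht.le)
        linarith
      · intro h
        exfalso
        have : t ≤ β := le_trans h (hF₀.1 hz.le)
        linarith
    · simp only [mem_setOf_eq, hF₁ge z (not_lt.1 hz)]
  have hqα : quantile F₁ α = D := hq2 α hα'α hαβ
  -- the integrand is an indicator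
  have hEq : ∀ t ∈ Ioo (0:ℝ) 1, Bdiv φ (quantile F₁ t) (quantile F₀ t)
      = Set.indicator (Ioc α' β) (fun s => Bdiv φ D (quantile F₀ s)) t := by
    intro t ht
    by_cases h1 : t ≤ α'
    · rw [hq1 t ht.1 h1, bdiv_self,
        Set.indicator_of_notMem (fun hmem => absurd hmem.1 (not_lt.2 h1))]
    · push_neg at h1
      by_cases h2 : t ≤ β
      · rw [hq2 t h1 h2, Set.indicator_of_mem (Set.mem_Ioc.2 ⟨h1, h2⟩)]
      · push_neg at h2
        rw [hq3 t h2, bdiv_self,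
          Set.indicator_of_notMem (fun hmem => absurd hmem.2 (not_le.2 h2))]
  -- integrability of the cost integrand on pieces
  have hqb : ∀ t ∈ Ioc (0:ℝ) 1, |quantile F₀ t| ≤ M := fun t ht =>
    abs_le.2 ⟨by linarith [quantile_nonneg hF₀ ht.1 ht.2], quantile_le_M hF₀ ht.1 ht.2⟩
  have hint : ∀ a b : ℝ, 0 < a → b ≤ 1 →
      IntegrableOn (fun t => Bdiv φ D (quantile F₀ t)) (Ioc a b) := by
    intro a b ha hb
    have hsub : Ioc a b ⊆ Ioc (0:ℝ) 1 := fun t ht => ⟨lt_trans ha ht.1, le_trans ht.2 hb⟩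
    exact integrableOn_bdiv hφd measurableSet_Ioc hsub
      (monotoneOn_const.mono (fun t _ => mem_univ t))
      ((quantile_monoOn hF₀).mono hsub)
      (fun t _ => hDM) (fun t ht => hqb t (hsub ht))
  -- compute the integral for F₁
  have hI : (∫ t in Ioo (0:ℝ) 1, Bdiv φ (quantile F₁ t) (quantile F₀ t))
      = (∫ t in Ioc α' α, Bdiv φ D (quantile F₀ t)) + cost := by
    rw [setIntegral_congr_fun measurableSet_Ioo hEq,
      setIntegral_indicator measurableSet_Ioc]
    have hae : (Ioo (0:ℝ) 1 ∩ Ioc α' β : Set ℝ) =ᵐ[volume] (Ioc α' β : Set ℝ) := by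
      rw [Filter.eventuallyEq_set]
      refine Filter.Eventually.mono (compl_mem_ae_iff.2 (Real.volume_singleton (a := 1)))
        fun z hz => ?_
      simp only [mem_compl_iff, mem_singleton_iff] at hz
      simp only [mem_inter_iff, mem_Ioo, mem_Ioc]
      constructor
      · rintro ⟨-, h⟩; exact h
      · rintro ⟨h1, h2⟩
        refine ⟨⟨lt_trans hα'0 h1, ?_⟩, h1, h2⟩
        rcases lt_or_eq_of_le (le_trans h2 hβ1) with h | h
        · exact h
        · exact absurd h hz
    rw [setIntegral_congr_set hae, ← Set.Ioc_union_Ioc_eq_Ioc hα'α.le hαβ,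
      setIntegral_union ?_ measurableSet_Ioc (hint α' α hα'0 hα1.le)
        (hint α β hα0 hβ1)]
    exact Set.disjoint_left.2 fun t h1 h2 => absurd h2.1 (not_lt.2 h1.2)
  -- bound the extra piece
  have hextra : (∫ t in Ioc α' α, Bdiv φ D (quantile F₀ t)) ≤ C * (α - α') := by
    have hb := norm_setIntegral_le_of_norm_le_const (μ := volume)
      (s := Ioc α' α) (C := C)
      (lt_of_le_of_lt (measure_mono Set.Ioc_subset_Icc_self) (by simp))
      (f := fun t => Bdiv φ D (quantile F₀ t)) ?_
    · have hvol : (volume (Ioc α' α)).toReal = α - α' := by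
        rw [Real.volume_Ioc, ENNReal.toReal_ofReal (by linarith)]
      rw [measureReal_def, hvol] at hb
      exact le_trans (le_abs_self _) hb
    · intro t ht
      have ht' : t ∈ Ioc (0:ℝ) 1 := ⟨lt_trans hα'0 ht.1, le_trans ht.2 hα1.le⟩
      have h1 := abs_le.1 hDM
      have h2 := abs_le.1 (hqb t ht')
      exact hC (D, quantile F₀ t) ⟨⟨h1.1, h1.2⟩, ⟨h2.1, h2.2⟩⟩
  refine ⟨F₁, ⟨hF₁cdf, ?_⟩, hqα⟩
  rw [hI]
  have h1 : C * (α - α') ≤ C * δ := mul_le_mul_of_nonneg_left hαδ hC0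
  have h2 : (C + 1) * δ = ε - cost := by
    rw [hδdef]; field_simp
  nlinarith [hδ]

/-- if `0 < ε ≤ ∫_α^1 B_φ(M, F₀⁻¹(t)) dt`, the worst-case
`α`-quantile over the BW ball equals `V̄_α`. -/
theorem sup_var_eq_Vbar (M ε α : ℝ) (hM : 0 < M) (hε : 0 < ε)
    (hα : α ∈ Set.Ioo (0:ℝ) 1) (φ F₀ : ℝ → ℝ)
    (hφ : StrictConvexOn ℝ Set.univ φ) (hφd : ContDiff ℝ 1 φ)
    (hF₀ : IsCDFOn F₀ M)
    (hsmall : ε ≤ ∫ t in Set.Ioc α 1, Bdiv φ M (quantile F₀ t)) :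
    sSup {v : ℝ | ∃ F : ℝ → ℝ, InBWBall φ F₀ F M ε ∧ v = quantile F α} =
      Vbar φ F₀ M ε α := by
  have hα0 := hα.1
  have hα1 := hα.2
  set S := {v : ℝ | ∃ F : ℝ → ℝ, InBWBall φ F₀ F M ε ∧ v = quantile F α} with hSdef
  set T := {D : ℝ | D ∈ Set.Ioc (quantile F₀ α) M ∧
    ε ≤ ∫ t in Set.Ioc α (F₀ D), Bdiv φ D (quantile F₀ t)} with hTdef
  have hq0M : quantile F₀ α < M := by
    rcases lt_or_eq_of_le (quantile_le_M hF₀ hα0 hα1.le) with h | h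
    · exact h
    · exfalso
      have hzero : EqOn (fun t => Bdiv φ M (quantile F₀ t)) (fun _ => (0:ℝ)) (Ioc α 1) := by
        intro t ht
        have h1 : quantile F₀ t ≤ M := quantile_le_M hF₀ (lt_trans hα0 ht.1) ht.2
        have h2 : M ≤ quantile F₀ t := by
          rw [← h]
          exact quantile_monoOn hF₀ ⟨hα0, hα1.le⟩ ⟨lt_trans hα0 ht.1, ht.2⟩ ht.1.le
        show Bdiv φ M (quantile F₀ t) = 0
        rw [le_antisymm h1 h2]
        exact bdiv_self φ M
      rw [setIntegral_congr_fun measurableSet_Ioc hzero, integral_zero] at hsmall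
      linarith
  have hMT : M ∈ T := ⟨⟨hq0M, le_rfl⟩, by rw [hF₀.2.2.1 M le_rfl]; exact hsmall⟩
  have hTne : T.Nonempty := ⟨M, hMT⟩
  have hTbd : BddBelow T := ⟨quantile F₀ α, fun D hD => hD.1.1.le⟩
  have hF₀ball : InBWBall φ F₀ F₀ M ε := by
    refine ⟨hF₀, ?_⟩
    have hzero : EqOn (fun t => Bdiv φ (quantile F₀ t) (quantile F₀ t)) (fun _ => (0:ℝ))
        (Ioo (0:ℝ) 1) := fun t _ => bdiv_self φ _
    rw [setIntegral_congr_fun measurableSet_Ioo hzero, integral_zero]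
    linarith
  have hq0S : quantile F₀ α ∈ S := ⟨F₀, hF₀ball, rfl⟩
  have hSne : S.Nonempty := ⟨quantile F₀ α, hq0S⟩
  have hSbd : BddAbove S := by
    refine ⟨M, ?_⟩
    rintro v ⟨F, hFb, rfl⟩
    exact quantile_le_M hFb.1 hα0 hα1.le
  have hgoal : sSup S = sInf T := by
    refine le_antisymm ?_ ?_
    · refine csSup_le hSne ?_
      rintro v ⟨F, hFb, rfl⟩
      refine le_csInf hTne fun D hD => ?_
      exact quantile_ball_le M ε α hM hε hα φ F₀ F hφ hφd hF₀ hFb D hD.1 hD.2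
    · by_contra hcon
      push_neg at hcon
      have hq0le : quantile F₀ α ≤ sSup S := le_csSup hSbd hq0S
      obtain ⟨D, hD1, hD2⟩ := exists_between hcon
      have hDq0 : quantile F₀ α < D := lt_of_le_of_lt hq0le hD1
      have hDM : D ≤ M := le_trans hD2.le (csInf_le hTbd hMT)
      have hDnotT : D ∉ T := fun h => absurd (csInf_le hTbd h) (not_le.2 hD2)
      have hcost : (∫ t in Set.Ioc α (F₀ D), Bdiv φ D (quantile F₀ t)) < ε := by
        by_contra hc
        push_neg at hc
        exact hDnotT ⟨⟨hDq0, hDM⟩, hc⟩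
      obtain ⟨F, hFb, hq⟩ :=
        exists_ball_quantile_eq M ε α hM hε hα φ F₀ hφ hφd hF₀ D hDq0 hDM hcost
      have : D ≤ sSup S := le_csSup hSbd ⟨F, hFb, hq.symm⟩
      linarith
  exact hgoal
end

section
/- Let S, G* be functions on [0,M] with S decreasing (a survival function), G* decreasing on [0, V̄) and on [V̄, M] separately with a possible upward jump at V̄, i.e. G*(V̄−) ≤ G*(V̄). Suppose G*(V̄−) < S(V̄) < G*(V̄) and set b = S(V̄), a₁ = sup{x ∈ [0,V̄) : G*(x) ≥ b}, a₂ = sup{x ∈ [V̄,M) : G*(x) ≥ b}. Define S̃(x) = (G*(x) ∨ b) on [0,V̄] and (G*(x) ∧ b) on [V̄,M]. Then S̃ is decreasing on [0,M], and for every x ∈ [a₁, a₂): either S(x) ≥ S̃(x) ≥ G*(x) (for x ∈ [a₁,V̄)) or S(x) ≤ S̃(x) ≤ G*(x) (for x ∈ [V̄,a₂)); in particular S̃ lies pointwise between S and G* on [a₁,a₂). -/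
/-! Left of `V̄` the function `G*` stays below `b = S(V̄)` from `a₁` on (at `a₁` itself by
right-continuity), while `S ≥ b` there since `S` is decreasing; so the flattened function equals
`b`, which sits between them. Symmetrically, right of `V̄` and before `a₂` we have `G* ≥ b ≥ S`.
Monotonicity of the flattening holds because `max · b ≥ b ≥ min · b` across the junction. -/

open Set

/-- The paper's `S̃`, for `v = V̄` and `b = S(V̄)`. -/
def flattenAt {α β : Type*} [LinearOrder α] [LinearOrder β] (G : α → β) (v : α) (b : β)
    (x : α) : β :=
  if x < v then max (G x) b else min (G x) b

theorem antitoneOn_flattenAt {α β : Type*} [LinearOrder α] [LinearOrder β] {G : α → β}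
    {s : Set α} {v : α} (b : β) (hlo : AntitoneOn G (s ∩ Iio v))
    (hhi : AntitoneOn G (s ∩ Ici v)) : AntitoneOn (flattenAt G v b) s := by
  intro x hx y hy hxy
  unfold flattenAt
  by_cases hyv : y < v
  · have hxv : x < v := hxy.trans_lt hyv
    rw [if_pos hxv, if_pos hyv]
    exact max_le_max (hlo ⟨hx, hxv⟩ ⟨hy, hyv⟩ hxy) le_rfl
  · rw [if_neg hyv]
    by_cases hxv : x < v
    · rw [if_pos hxv]
      exact (min_le_right _ _).trans (le_max_right _ _)
    · rw [if_neg hxv]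
      exact min_le_min (hhi ⟨hx, not_lt.mp hxv⟩ ⟨hy, not_lt.mp hyv⟩ hxy) le_rfl

theorem apply_le_of_mem_Ico_csSup {β : Type*} [LinearOrder β] [TopologicalSpace β]
    [OrderClosedTopology β] {G : ℝ → β} {l v x : ℝ} {b : β}
    (hrc : ∀ y ∈ Ico l v, ContinuousWithinAt G (Ici y) y)
    (hl : l ≤ sSup {y | y ∈ Ico l v ∧ b ≤ G y})
    (hx : x ∈ Ico (sSup {y | y ∈ Ico l v ∧ b ≤ G y}) v) : G x ≤ b := by
  set a := sSup {y | y ∈ Ico l v ∧ b ≤ G y}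
  have hgt : ∀ y ∈ Ioo a v, G y < b := fun y hy ↦ not_le.mp fun hby ↦
    hy.1.not_ge (le_csSup ⟨v, fun z hz ↦ hz.1.2.le⟩ ⟨⟨hl.trans hy.1.le, hy.2⟩, hby⟩)
  rcases hx.1.eq_or_lt with rfl | hax
  · refine le_of_tendsto ((hrc a ⟨hl, hx.2⟩).mono Ioi_subset_Ici_self) ?_
    filter_upwards [Ioo_mem_nhdsGT hx.2] with y hy
    exact (hgt y hy).le
  · exact (hgt x ⟨hax, hx.2⟩).le

/-- Since `sSup ∅ = 0` on `ℝ`, the interval `[v, sSup A)` is empty for empty `A` only when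
`0 ≤ v`. -/
theorem exists_mem_gt_of_mem_Ico_sSup {A : Set ℝ} {v x : ℝ} (hv : 0 ≤ v)
    (hx : x ∈ Ico v (sSup A)) :
    ∃ y ∈ A, x < y := by
  rcases A.eq_empty_or_nonempty with rfl | hA
  · rw [Real.sSup_empty] at hx
    exact absurd (hx.1.trans_lt hx.2) hv.not_gt
  · exact exists_lt_of_lt_csSup hA hx.2

theorem le_apply_of_mem_Ico_csSup {β : Type*} [LinearOrder β] {G : ℝ → β} {v w x : ℝ} {b : β}
    (hG : AntitoneOn G (Icc v w)) (hv : 0 ≤ v)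
    (hx : x ∈ Ico v (sSup {y | y ∈ Ico v w ∧ b ≤ G y})) : x < w ∧ b ≤ G x := by
  obtain ⟨y, ⟨hyI, hby⟩, hxy⟩ := exists_mem_gt_of_mem_Ico_sSup hv hx
  have hxw : x < w := hxy.trans hyI.2
  exact ⟨hxw, hby.trans (hG ⟨hx.1, hxw.le⟩ ⟨hyI.1, hyI.2.le⟩ hxy.le)⟩

theorem flattened_optimizer_between_general (M Vbar : ℝ)
    (hV : Vbar ∈ Set.Ioo 0 M) (S Gstar : ℝ → ℝ)
    (hS : AntitoneOn S (Set.Icc 0 M))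
    (hG1 : AntitoneOn Gstar (Set.Ico 0 Vbar))
    (hG2 : AntitoneOn Gstar (Set.Icc Vbar M))
    (hG1rc : ∀ x ∈ Set.Ico (0:ℝ) Vbar, ContinuousWithinAt Gstar (Set.Ici x) x) :
    AntitoneOn
      (fun x => if x < Vbar then max (Gstar x) (S Vbar) else min (Gstar x) (S Vbar))
      (Set.Icc 0 M) ∧
    (∀ x ∈ Set.Ico (sSup {x | x ∈ Set.Ico (0:ℝ) Vbar ∧ S Vbar ≤ Gstar x}) Vbar,
      Gstar x ≤
        (if x < Vbar then max (Gstar x) (S Vbar) else min (Gstar x) (S Vbar)) ∧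
      (if x < Vbar then max (Gstar x) (S Vbar) else min (Gstar x) (S Vbar)) ≤ S x) ∧
    (∀ x ∈ Set.Ico Vbar (sSup {x | x ∈ Set.Ico Vbar M ∧ S Vbar ≤ Gstar x}),
      S x ≤
        (if x < Vbar then max (Gstar x) (S Vbar) else min (Gstar x) (S Vbar)) ∧
      (if x < Vbar then max (Gstar x) (S Vbar) else min (Gstar x) (S Vbar)) ≤ Gstar x) := by
  obtain ⟨hV0, hVM⟩ := hV
  have hVmem : Vbar ∈ Icc 0 M := ⟨hV0.le, hVM.le⟩
  refine ⟨antitoneOn_flattenAt (S Vbar) (hG1.mono fun x hx ↦ ⟨hx.1.1, hx.2⟩)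
    (hG2.mono fun x hx ↦ ⟨hx.2, hx.1.2⟩), fun x hx ↦ ?_, fun x hx ↦ ?_⟩
  · have ha0 : 0 ≤ sSup {y | y ∈ Ico (0:ℝ) Vbar ∧ S Vbar ≤ Gstar y} :=
      Real.sSup_nonneg fun y hy ↦ hy.1.1
    have hGb := apply_le_of_mem_Ico_csSup hG1rc ha0 hx
    have hbS : S Vbar ≤ S x := hS ⟨ha0.trans hx.1, hx.2.le.trans hVM.le⟩ hVmem hx.2.le
    rw [if_pos hx.2, max_eq_right hGb]
    exact ⟨hGb, hbS⟩
  · obtain ⟨hxM, hbG⟩ := le_apply_of_mem_Ico_csSup hG2 hV0.le hx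
    have hSb : S x ≤ S Vbar := hS hVmem ⟨hV0.le.trans hx.1, hxM.le⟩ hx.1
    rw [if_neg hx.1.not_gt, min_eq_right hbG]
    exact ⟨hSb, hbG⟩

/-- flattening the pointwise optimizer `G*` at level `b = S(V̄)`
yields a decreasing function `S̃` lying pointwise between `S` and `G*` on
`[a₁, a₂)`. -/
theorem flattened_optimizer_between (M Vbar : ℝ) (hM : 0 < M)
    (hV : Vbar ∈ Set.Ioo 0 M) (S Gstar : ℝ → ℝ)
    (hS : AntitoneOn S (Set.Icc 0 M))
    (hG1 : AntitoneOn Gstar (Set.Ico 0 Vbar))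
    (hG2 : AntitoneOn Gstar (Set.Icc Vbar M))
    (hG1rc : ∀ x ∈ Set.Ico (0:ℝ) Vbar, ContinuousWithinAt Gstar (Set.Ici x) x)
    (hG2rc : ∀ x ∈ Set.Icc Vbar M, ContinuousWithinAt Gstar (Set.Ici x) x)
    (hjump : Function.leftLim Gstar Vbar ≤ Gstar Vbar)
    (hlt : Function.leftLim Gstar Vbar < S Vbar)
    (hlt' : S Vbar < Gstar Vbar) :
    AntitoneOn
      (fun x => if x < Vbar then max (Gstar x) (S Vbar) else min (Gstar x) (S Vbar))
      (Set.Icc 0 M) ∧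
    (∀ x ∈ Set.Ico (sSup {x | x ∈ Set.Ico (0:ℝ) Vbar ∧ S Vbar ≤ Gstar x}) Vbar,
      Gstar x ≤
        (if x < Vbar then max (Gstar x) (S Vbar) else min (Gstar x) (S Vbar)) ∧
      (if x < Vbar then max (Gstar x) (S Vbar) else min (Gstar x) (S Vbar)) ≤ S x) ∧
    (∀ x ∈ Set.Ico Vbar (sSup {x | x ∈ Set.Ico Vbar M ∧ S Vbar ≤ Gstar x}),
      S x ≤
        (if x < Vbar then max (Gstar x) (S Vbar) else min (Gstar x) (S Vbar)) ∧
      (if x < Vbar then max (Gstar x) (S Vbar) else min (Gstar x) (S Vbar)) ≤ Gstar x) :=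
  flattened_optimizer_between_general M Vbar hV S Gstar hS hG1 hG2 hG1rc
end
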